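/- arXiv:math/0010049 — 3 statements merged into one kernel-verified Lean document; each statement's English description precedes it below -/
import Mathlib

section
/- Let x₂, x₃, x₄, x₅ be variables and set x₁ = −(x₂+x₃+x₄+x₅)/(t+1), x₀ = −t(x₂+x₃+x₄+x₅)/(t+1) (in the field of rational functions in t). Then σ₅(x₀,…,x₅) = (x₂+x₃+x₄+x₅)·( (t/(t+1)²)·e₁e₃ − e₄ ), where eⱼ = eⱼ(x₂,x₃,x₄,x₅) is the j-th elementary symmetric polynomial and σ₅ is the fifth elementary symmetric polynomial in six variables. -/
/-! Expanding `σ₅` in the first two variables gives `σ₅ = (x₀ + x₁)·e₄ + x₀x₁·e₃`, and the chosen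
`x₀, x₁` are the two roots of `X² + sX + t s²/(t+1)²`: their sum is `−s` and their product
`t s²/(t+1)²`. -/

theorem residual_quartic_pencil_general (K : Type*) [Field K] (t x₂ x₃ x₄ x₅ : K)
    (ht1 : t + 1 ≠ 0) :
    let s : K := x₂ + x₃ + x₄ + x₅
    let x₁ : K := -s / (t + 1)
    let x₀ : K := -(t * s) / (t + 1)
    let e₁ : K := x₂ + x₃ + x₄ + x₅
    let e₃ : K := x₂ * x₃ * x₄ + x₂ * x₃ * x₅ + x₂ * x₄ * x₅ + x₃ * x₄ * x₅
    let e₄ : K := x₂ * x₃ * x₄ * x₅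
    x₁ * x₂ * x₃ * x₄ * x₅ + x₀ * x₂ * x₃ * x₄ * x₅ + x₀ * x₁ * x₃ * x₄ * x₅
      + x₀ * x₁ * x₂ * x₄ * x₅ + x₀ * x₁ * x₂ * x₃ * x₅ + x₀ * x₁ * x₂ * x₃ * x₄
    = s * (t / (t + 1) ^ 2 * (e₁ * e₃) - e₄) := by
  intro s x₁ x₀ e₁ e₃ e₄
  have roots_add : x₀ + x₁ = -s := by
    simp only [x₀, x₁]
    field_simp
    ring
  have roots_mul : x₀ * x₁ = t / (t + 1) ^ 2 * s ^ 2 := by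
    simp only [x₀, x₁]
    field_simp
  linear_combination e₄ * roots_add + e₃ * roots_mul

/-- The residual quartic pencil on the Barth–Nieto quintic: setting
`x₁ = −(x₂+x₃+x₄+x₅)/(t+1)` and `x₀ = −t(x₂+x₃+x₄+x₅)/(t+1)`, the quintic
`σ₅(x₀,…,x₅)` equals `(x₂+x₃+x₄+x₅)·((t/(t+1)²)·e₁e₃ − e₄)`, where `eⱼ` is the `j`-th
elementary symmetric polynomial in `x₂, x₃, x₄, x₅`. -/
theorem residual_quartic_pencil (K : Type*) [Field K] (t x₂ x₃ x₄ x₅ : K)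
    (ht : t ≠ 0) (ht1 : t + 1 ≠ 0) :
    let s : K := x₂ + x₃ + x₄ + x₅
    let x₁ : K := -s / (t + 1)
    let x₀ : K := -(t * s) / (t + 1)
    let e₁ : K := x₂ + x₃ + x₄ + x₅
    let e₃ : K := x₂ * x₃ * x₄ + x₂ * x₃ * x₅ + x₂ * x₄ * x₅ + x₃ * x₄ * x₅
    let e₄ : K := x₂ * x₃ * x₄ * x₅
    x₁ * x₂ * x₃ * x₄ * x₅ + x₀ * x₂ * x₃ * x₄ * x₅ + x₀ * x₁ * x₃ * x₄ * x₅
      + x₀ * x₁ * x₂ * x₄ * x₅ + x₀ * x₁ * x₂ * x₃ * x₅ + x₀ * x₁ * x₂ * x₃ * x₄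
    = s * (t / (t + 1) ^ 2 * (e₁ * e₃) - e₄) :=
  residual_quartic_pencil_general K t x₂ x₃ x₄ x₅ ht1
end

section
/- Let p ≥ 5 be prime. The fixed points of the involution (x₀:…:x₅) ↦ (x₀⁻¹:…:x₅⁻¹) on U(𝔽_p) = { (x₀:…:x₅) ∈ P⁵(𝔽_p) : Σxᵢ = 0, Σxᵢ⁻¹ = 0, all xᵢ ≠ 0 } are exactly the 10 Segre points, i.e. the points (x₀:…:x₅) where three of the coordinates equal some λ and the other three equal −λ. -/
/-!
At a fixed point `xᵢ⁻¹ = μ xᵢ`, so every `xᵢ²` equals `μ⁻¹` and each coordinate is `±x₀`.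
If `k` coordinates equal `x₀`, then `Σ xᵢ = 2 (k - 3) x₀`; as `p ≠ 2` and `|k - 3| ≤ 3 < p`,
this vanishes only for `k = 3`. Conversely, at a Segre point `xᵢ² = λ²` for all `i`, so
`xᵢ⁻¹ = λ⁻² xᵢ`.
-/

open Finset

theorem eq_or_eq_neg_of_inv_eq_mul {K : Type*} [Field K] {a b μ : K} (ha : a ≠ 0) (hb : b ≠ 0)
    (ha' : a⁻¹ = μ * a) (hb' : b⁻¹ = μ * b) : a = b ∨ a = -b := by
  have hμa : μ * (a * a) = 1 := by rw [← mul_assoc, ← ha', inv_mul_cancel₀ ha]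
  have hμb : μ * (b * b) = 1 := by rw [← mul_assoc, ← hb', inv_mul_cancel₀ hb]
  have hμ : μ ≠ 0 := left_ne_zero_of_mul_eq_one hμa
  exact mul_self_eq_mul_self_iff.1 (mul_left_cancel₀ hμ (hμa.trans hμb.symm))

theorem ZMod.intCast_eq_zero_of_natAbs_lt {p : ℕ} {n : ℤ} (h : (n : ZMod p) = 0)
    (hn : n.natAbs < p) : n = 0 :=
  Int.eq_zero_of_dvd_of_natAbs_lt_natAbs ((ZMod.intCast_zmod_eq_zero_iff_dvd n p).1 h) hn

theorem sum_eq_of_forall_eq_or_eq_neg {ι K : Type*} [Fintype ι] [Ring K] [DecidableEq K]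
    {x : ι → K} {c : K} (h : ∀ i, x i = c ∨ x i = -c) :
    ∑ i, x i = ((2 * #{i | x i = c} - Fintype.card ι : ℤ) : K) * c := by
  have hx : ∀ i, x i = if x i = c then c else -c := fun i => by
    split_ifs with hi
    · exact hi
    · exact (h i).resolve_left hi
  rw [sum_congr rfl fun i _ => hx i, sum_ite, sum_const, sum_const, ← card_univ,
    ← card_filter_add_card_filter_not (s := univ) fun i => x i = c]
  push_cast
  simp only [nsmul_eq_mul]
  noncomm_ring

theorem card_filter_eq_three_of_sum_eq_zero {p : ℕ} [Fact p.Prime] (hp5 : 5 ≤ p)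
    {x : Fin 6 → ZMod p} {c : ZMod p} (hc : c ≠ 0) (h : ∀ i, x i = c ∨ x i = -c)
    (hsum : ∑ i, x i = 0) : #{i | x i = c} = 3 := by
  set k := #{i | x i = c}
  have hk : k ≤ 6 := card_le_univ _
  rw [sum_eq_of_forall_eq_or_eq_neg h, Fintype.card_fin] at hsum
  have hk3 : ((2 * (k - 3) : ℤ) : ZMod p) = 0 := by
    rw [← (mul_eq_zero.1 hsum).resolve_right hc]
    push_cast
    ring
  rw [Int.cast_mul] at hk3
  have h2 : ((2 : ℤ) : ZMod p) ≠ 0 := fun h2 =>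
    two_ne_zero (ZMod.intCast_eq_zero_of_natAbs_lt h2 (by omega))
  have := ZMod.intCast_eq_zero_of_natAbs_lt ((mul_eq_zero.1 hk3).resolve_left h2) (by omega)
  omega

/-- The fixed points of the involution `x ↦ x⁻¹` (coordinatewise) on the open part of the
Barth–Nieto quintic over `𝔽_p` are exactly the Segre points: a point `x` with all `xᵢ ≠ 0`,
`Σxᵢ = 0`, `Σxᵢ⁻¹ = 0` is fixed (i.e. `xᵢ⁻¹ = μ·xᵢ` for some `μ` and all `i`) if and only if
there is `λ ≠ 0` and a set of three indices on which `x` equals `λ` while on the complementary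
three indices `x` equals `−λ`. -/
theorem fixed_points_are_segre (p : ℕ) (hp : p.Prime) (hp5 : 5 ≤ p) :
    haveI : Fact p.Prime := ⟨hp⟩
    ∀ x : Fin 6 → ZMod p, (∀ i, x i ≠ 0) → (∑ i, x i) = 0 → (∑ i, (x i)⁻¹) = 0 →
      ((∃ μ : ZMod p, ∀ i, (x i)⁻¹ = μ * x i) ↔
        ∃ (lam : ZMod p) (s : Finset (Fin 6)), lam ≠ 0 ∧ s.card = 3 ∧
          ∀ i, x i = if i ∈ s then lam else -lam) := by
  have : Fact p.Prime := ⟨hp⟩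
  intro x hx hsum _
  constructor
  · rintro ⟨μ, hμ⟩
    have h : ∀ i, x i = x 0 ∨ x i = -x 0 := fun i =>
      eq_or_eq_neg_of_inv_eq_mul (hx i) (hx 0) (hμ i) (hμ 0)
    refine ⟨x 0, univ.filter (x · = x 0), hx 0,
      card_filter_eq_three_of_sum_eq_zero hp5 (hx 0) h hsum, fun i => ?_⟩
    simp only [mem_filter_univ]
    split_ifs with hi
    exacts [hi, (h i).resolve_left hi]
  · rintro ⟨lam, s, -, -, hs⟩
    refine ⟨(lam * lam)⁻¹, fun i => ?_⟩
    have hsq : x i * x i = lam * lam := by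
      rw [hs i]
      split_ifs <;> ring
    rw [← hsq, ← div_eq_inv_mul, div_self_mul_self']
end

section
/- For every prime p ≥ 5, the cardinality #U(𝔽_p) of the set U(𝔽_p) = { (x₀:…:x₅) ∈ P⁵(𝔽_p) : Σxᵢ = 0, Σxᵢ⁻¹ = 0, all xᵢ ≠ 0 } is even. -/
open Projectivization

/-- The open part of the Barth–Nieto quintic in `ℙ⁵(𝔽_p)`: all coordinates nonzero,
`Σ xᵢ = 0` and `Σ xᵢ⁻¹ = 0` (these conditions are invariant under scaling, so they may be
tested on the chosen representative). -/
def barthNietoU (p : ℕ) [Fact p.Prime] :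
    Set (Projectivization (ZMod p) (Fin 6 → ZMod p)) :=
  {x | (∀ i, x.rep i ≠ 0) ∧ (∑ i, x.rep i) = 0 ∧ (∑ i, (x.rep i)⁻¹) = 0}

/-!
The coordinatewise inverse `x ↦ x⁻¹` is a well-defined involution of `ℙ⁵` preserving `U`, so
`#U(𝔽_p)` has the parity of its number of fixed points in `U`. A fixed point satisfies
`xᵢ² = const`, i.e. it is a sign vector `(±1 : … : ±1)`; for `p ≥ 5`, `Σ xᵢ = 0` forces exactly
three signs `+1`, so there are `C(6,3)/2 = 10` fixed points.
-/

open Function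
open scoped LinearAlgebra.Projectivization

theorem Function.Involutive.even_ncard_of_mapsTo {α : Type*} {f : α → α} (hf : Involutive f)
    {s : Set α} (hs : s.Finite) (hfs : Set.MapsTo f s s) (hfix : ∀ x ∈ s, f x ≠ x) :
    Even s.ncard := by
  lift s to Finset α using hs
  rw [Set.ncard_coe_finset, ← ZMod.natCast_eq_zero_iff_even, Finset.card_eq_sum_ones,
    Nat.cast_sum]
  exact Finset.sum_involution (fun x _ ↦ f x) (fun _ _ ↦ by decide) (fun x hx _ ↦ hfix x hx)
    (fun _ hx ↦ hfs hx) (fun x _ ↦ hf x)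

theorem Function.Involutive.even_ncard_iff {α : Type*} {f : α → α} (hf : Involutive f)
    {s : Set α} (hs : s.Finite) (hfs : Set.MapsTo f s s) :
    Even s.ncard ↔ Even (s ∩ fixedPoints f).ncard := by
  have hdiff : Even (s \ fixedPoints f).ncard := by
    refine hf.even_ncard_of_mapsTo hs.sdiff (fun x hx ↦ ⟨hfs hx.1, fun hfx ↦ hx.2 ?_⟩)
      fun x hx ↦ hx.2
    simpa [IsFixedPt, hf x] using congrArg f hfx
  rw [← Set.ncard_inter_add_ncard_sdiff_eq_ncard s (fixedPoints f) hs, Nat.even_add]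
  simp [hdiff]

theorem Pi.inv_ne_zero {ι K : Type*} [Field K] {v : ι → K} (hv : v ≠ 0) : v⁻¹ ≠ 0 := by
  simpa [funext_iff] using hv

section signVector

variable (K : Type*) {ι : Type*} [Field K] [DecidableEq ι]

def signVector (S : Finset ι) : ι → K := fun i ↦ if i ∈ S then 1 else -1

variable {K}

theorem signVector_apply_ne_zero (S : Finset ι) (i : ι) : signVector K S i ≠ 0 := by
  unfold signVector; split_ifs <;> simp

theorem signVector_ne_zero [Nonempty ι] (S : Finset ι) : signVector K S ≠ 0 :=
  fun h ↦ signVector_apply_ne_zero S (Classical.arbitrary ι) (congrFun h _)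

theorem inv_signVector (S : Finset ι) : (signVector K S)⁻¹ = signVector K S := by
  ext i; simp only [Pi.inv_apply, signVector]; split_ifs <;> simp

theorem signVector_injective (hK : ringChar K ≠ 2) :
    Injective (signVector K : Finset ι → ι → K) := by
  have h := (Ring.neg_one_ne_one_of_char_ne_two hK).symm
  intro S T hST
  ext i
  have := congrFun hST i
  by_cases hS : i ∈ S <;> by_cases hT : i ∈ T <;>
    simp only [signVector, hS, hT, if_true, if_false] at this ⊢
  exacts [(h this).elim, (h this.symm).elim]

theorem sum_signVector_add_card [Fintype ι] (S : Finset ι) :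
    ∑ i, signVector K S i + Fintype.card ι = 2 * S.card := by
  simp only [signVector, Finset.sum_ite, Finset.sum_const, Finset.filter_univ_mem, nsmul_eq_mul]
  rw [← Finset.card_add_card_compl S, Finset.filter_not, Finset.filter_univ_mem,
    ← Finset.compl_eq_univ_sdiff]
  push_cast; ring

theorem eq_smul_signVector_of_smul_eq_inv [Fintype ι] [DecidableEq K] {v : ι → K}
    (hv : ∀ i, v i ≠ 0) {c : K} (hc : c • v = v⁻¹) (j : ι) :
    v = v j • signVector K (Finset.univ.filter fun i ↦ v i = v j) := by
  have hsq : ∀ i, c * v i ^ 2 = 1 := fun i ↦ by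
    have := congrFun hc i
    simp only [Pi.smul_apply, smul_eq_mul, Pi.inv_apply] at this
    field_simp [hv i] at this ⊢
    linear_combination this
  ext i
  have hij : v i = v j ∨ v i = -v j :=
    sq_eq_sq_iff_eq_or_eq_neg.1 (mul_left_cancel₀ (left_ne_zero_of_mul_eq_one (hsq i))
      ((hsq i).trans (hsq j).symm))
  by_cases h : v i = v j
  · simp [signVector, h]
  · simp [signVector, hij.resolve_left h]

end signVector

theorem ZMod.sum_signVector_eq_zero_iff {ι : Type*} [Fintype ι] [DecidableEq ι] {p m : ℕ}
    [Fact p.Prime] (hp : p ≠ 2) (hmp : m < p) (hι : Fintype.card ι = 2 * m) (S : Finset ι) :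
    ∑ i, signVector (ZMod p) S i = 0 ↔ S.card = m := by
  have key := sum_signVector_add_card (K := ZMod p) S
  rw [hι, Nat.cast_mul, Nat.cast_two] at key
  constructor
  · intro h
    rw [h, zero_add] at key
    have hcast : (m : ZMod p) = S.card :=
      mul_left_cancel₀ (Ring.two_ne_zero (by rwa [ZMod.ringChar_zmod_n])) key
    have hS : S.card ≤ 2 * m := hι ▸ Finset.card_le_univ S
    refine (((ZMod.natCast_eq_natCast_iff _ _ _).1 hcast).eq_of_abs_lt ?_).symm
    rw [abs_lt]; constructor <;> omega
  · rintro rfl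
    linear_combination key

namespace Projectivization

variable {K ι : Type*} [Field K]

/-- The coordinatewise inverse, with `0⁻¹ = 0`. It is well defined on all of `ℙ K (ι → K)`
because `(t • v)⁻¹ = t⁻¹ • v⁻¹` holds coordinatewise, zero coordinates included. -/
def coordInv : ℙ K (ι → K) → ℙ K (ι → K) :=
  Projectivization.lift (fun v ↦ mk K (v : ι → K)⁻¹ (Pi.inv_ne_zero v.2)) <| by
    rintro ⟨-, hv⟩ ⟨w, hw⟩ t rfl
    have ht : t ≠ 0 := by rintro rfl; simp at hv
    exact (mk_eq_mk_iff' K _ _ _ _).2 ⟨t⁻¹, by ext i; simp [mul_comm]⟩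

@[simp]
theorem coordInv_mk (v : ι → K) (hv : v ≠ 0) :
    coordInv (mk K v hv) = mk K v⁻¹ (Pi.inv_ne_zero hv) :=
  rfl

theorem coordInv_involutive : Involutive (coordInv : ℙ K (ι → K) → ℙ K (ι → K)) := by
  intro x
  induction x using Projectivization.ind with
  | h v hv => simp only [coordInv_mk, inv_inv]

variable [DecidableEq ι] [Nonempty ι]

theorem isFixedPt_coordInv_mk_signVector (S : Finset ι) :
    IsFixedPt coordInv (mk K (signVector K S) (signVector_ne_zero S)) := by
  simp only [IsFixedPt, coordInv_mk, inv_signVector]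

/-- Normalising the `j`-th coordinate to `1` picks one of the two sign vectors `S`, `Sᶜ` that
represent each fixed point. -/
theorem exists_mk_signVector_eq_of_isFixedPt_coordInv [Fintype ι] {v : ι → K} (hv : v ≠ 0)
    (hv₀ : ∀ i, v i ≠ 0) (hfix : IsFixedPt coordInv (mk K v hv)) (j : ι) :
    ∃ S : Finset ι, j ∈ S ∧ mk K (signVector K S) (signVector_ne_zero S) = mk K v hv := by
  classical
  obtain ⟨c, hc⟩ := (mk_eq_mk_iff _ _ _ _ hv).1 hfix
  have hvS := eq_smul_signVector_of_smul_eq_inv hv₀ hc j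
  exact ⟨_, by simp, ((mk_eq_mk_iff' _ _ _ _ _).2 ⟨v j, hvS.symm⟩).symm⟩

theorem mk_signVector_injOn (hK : ringChar K ≠ 2) (j : ι) :
    Set.InjOn (fun S ↦ mk K (signVector K S) (signVector_ne_zero S)) {S | j ∈ S} := by
  intro S hS T hT hST
  obtain ⟨a, ha⟩ := (mk_eq_mk_iff K _ _ _ _).1 hST
  have ha1 : a = 1 := by
    have := congrFun ha j
    simp only [signVector, Pi.smul_apply, show j ∈ S from hS, show j ∈ T from hT, if_true,
      Units.smul_def, smul_eq_mul, mul_one] at this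
    exact Units.val_eq_one.1 this
  rw [ha1, one_smul] at ha
  exact signVector_injective hK ha.symm

end Projectivization

section IsBarthNietoVector

variable {K ι : Type*} [Field K] [Fintype ι]

def IsBarthNietoVector (v : ι → K) : Prop :=
  (∀ i, v i ≠ 0) ∧ ∑ i, v i = 0 ∧ ∑ i, (v i)⁻¹ = 0

theorem IsBarthNietoVector.smul {v : ι → K} (hv : IsBarthNietoVector v) (c : Kˣ) :
    IsBarthNietoVector (c • v) := by
  obtain ⟨hne, hsum, hsum_inv⟩ := hv
  refine ⟨fun i ↦ smul_ne_zero c.ne_zero (hne i), ?_, ?_⟩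
  · simp only [Pi.smul_apply, Units.smul_def, smul_eq_mul, ← Finset.mul_sum, hsum, mul_zero]
  · simp only [Pi.smul_apply, Units.smul_def, smul_eq_mul, mul_inv, ← Finset.mul_sum, hsum_inv,
      mul_zero]

theorem isBarthNietoVector_smul_iff {v : ι → K} (c : Kˣ) :
    IsBarthNietoVector (c • v) ↔ IsBarthNietoVector v :=
  ⟨fun h ↦ by simpa using h.smul c⁻¹, fun h ↦ h.smul c⟩

theorem IsBarthNietoVector.inv {v : ι → K} (hv : IsBarthNietoVector v) :
    IsBarthNietoVector v⁻¹ := by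
  obtain ⟨hne, hsum, hsum_inv⟩ := hv
  exact ⟨fun i ↦ inv_ne_zero (hne i), hsum_inv, by simpa using hsum⟩

theorem isBarthNietoVector_signVector_iff [DecidableEq ι] (S : Finset ι) :
    IsBarthNietoVector (signVector K S) ↔ ∑ i, signVector K S i = 0 := by
  refine ⟨fun h ↦ h.2.1, fun h ↦ ⟨signVector_apply_ne_zero S, h, ?_⟩⟩
  exact (Finset.sum_congr rfl fun i _ ↦ congrFun (inv_signVector S) i).trans h

end IsBarthNietoVector

section barthNietoU

variable {p : ℕ} [Fact p.Prime]

theorem mk_mem_barthNietoU_iff {v : Fin 6 → ZMod p} (hv : v ≠ 0) :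
    mk (ZMod p) v hv ∈ barthNietoU p ↔ IsBarthNietoVector v := by
  obtain ⟨c, hc⟩ := exists_smul_eq_mk_rep (ZMod p) v hv
  change IsBarthNietoVector (mk (ZMod p) v hv).rep ↔ _
  rw [← hc, isBarthNietoVector_smul_iff]

theorem mapsTo_coordInv_barthNietoU :
    Set.MapsTo coordInv (barthNietoU p) (barthNietoU p) := by
  intro x hx
  induction x using Projectivization.ind with
  | h v hv =>
    rw [coordInv_mk, mk_mem_barthNietoU_iff]
    exact ((mk_mem_barthNietoU_iff hv).1 hx).inv

theorem mk_signVector_mem_barthNietoU_iff (hp5 : 5 ≤ p) (S : Finset (Fin 6)) :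
    mk (ZMod p) (signVector (ZMod p) S) (signVector_ne_zero S) ∈ barthNietoU p ↔
      S.card = 3 := by
  rw [mk_mem_barthNietoU_iff, isBarthNietoVector_signVector_iff,
    ZMod.sum_signVector_eq_zero_iff (m := 3) (by omega) (by omega) rfl]

theorem barthNietoU_inter_fixedPoints_coordInv (hp5 : 5 ≤ p) :
    barthNietoU p ∩ fixedPoints coordInv =
      (fun S ↦ mk (ZMod p) (signVector (ZMod p) S) (signVector_ne_zero S)) ''
        {S | 0 ∈ S ∧ S.card = 3} := by
  ext x
  induction x using Projectivization.ind with
  | h v hv =>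
    constructor
    · rintro ⟨hU, hfix⟩
      obtain ⟨S, hS₀, hSv⟩ := exists_mk_signVector_eq_of_isFixedPt_coordInv hv
        ((mk_mem_barthNietoU_iff hv).1 hU).1 hfix 0
      exact ⟨S, ⟨hS₀, (mk_signVector_mem_barthNietoU_iff hp5 S).1 (hSv ▸ hU)⟩, hSv⟩
    · rintro ⟨S, ⟨-, hS⟩, hx⟩
      rw [← hx]
      exact ⟨(mk_signVector_mem_barthNietoU_iff hp5 S).2 hS,
        isFixedPt_coordInv_mk_signVector S⟩

theorem ncard_barthNietoU_inter_fixedPoints_coordInv (hp5 : 5 ≤ p) :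
    (barthNietoU p ∩ fixedPoints coordInv).ncard = 10 := by
  rw [barthNietoU_inter_fixedPoints_coordInv hp5, Set.InjOn.ncard_image
    ((mk_signVector_injOn (by rw [ZMod.ringChar_zmod_n]; omega) 0).mono fun _ h ↦ h.1),
    Set.ncard_eq_toFinset_card']
  rfl

end barthNietoU

/-- For every prime `p ≥ 5`, the number of `𝔽_p`-points of the open part of the
Barth–Nieto quintic is even. -/
theorem card_barthNietoU_even (p : ℕ) (hp : p.Prime) (hp5 : 5 ≤ p) :
    haveI : Fact p.Prime := ⟨hp⟩
    Even (barthNietoU p).ncard := by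
  have : Fact p.Prime := ⟨hp⟩
  rw [Involutive.even_ncard_iff coordInv_involutive (Set.toFinite _)
    mapsTo_coordInv_barthNietoU, ncard_barthNietoU_inter_fixedPoints_coordInv hp5]
  decide
end
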